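/- arXiv:2002.00134 — 4 statements merged into one kernel-verified Lean document; each statement's English description precedes it below -/
import Mathlib

section
/- If (f(x,t), g(x,t))ᵀ solves the linear system Ψ_x = U Ψ, Ψ_t = V Ψ with spectral parameter λ, where U = [[λ, u],[−ε û, −λ]] and V = [[−2iλ² − iε u û, −2iλu − i u_x],[2iελ û − iε û_x, 2iλ² + iε u û]] and û(x,t) := u*(−x,t), then the pair (ĝ(x,t), ε f̂(x,t))ᵀ := (g*(−x,t), ε f*(−x,t))ᵀ solves the same linear system with λ replaced by λ*. -/
/-! Applying `h ↦ ĥ` to the Lax system of `(f, g)` at `-x` and swapping the two components gives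
the system at `λ*`: reflection flips the sign of `∂ₓ`, which swaps the diagonal entries `±λ`, and
conjugation fixes the coefficients involving `ε` because `ε` is real. -/

open Complex ComplexConjugate

theorem HasDerivAt.conj_comp_neg {h : ℝ → ℂ} {h' : ℂ} {x : ℝ} (hh : HasDerivAt h h' (-x)) :
    HasDerivAt (fun y => conj (h (-y))) (-conj h') x := by
  simpa [Function.comp_def] using (hh.scomp x (hasDerivAt_neg x)).star

theorem HasDerivAt.conj {h : ℝ → ℂ} {h' : ℂ} {t : ℝ} (hh : HasDerivAt h h' t) :
    HasDerivAt (fun s => conj (h s)) (conj h') t :=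
  hh.star

theorem lax_pair_nonlocal_symmetry_general (ε lam : ℂ) (hε : ε = 1 ∨ ε = -1)
    (u ux f g : ℝ → ℝ → ℂ)
    (hfx : ∀ x t : ℝ, HasDerivAt (fun y : ℝ => f y t)
      (lam * f x t + u x t * g x t) x)
    (hgx : ∀ x t : ℝ, HasDerivAt (fun y : ℝ => g y t)
      (-ε * (starRingEnd ℂ) (u (-x) t) * f x t - lam * g x t) x)
    (hft : ∀ x t : ℝ, HasDerivAt (fun s : ℝ => f x s)
      ((-(2 * Complex.I * lam ^ 2) - Complex.I * ε * u x t * (starRingEnd ℂ) (u (-x) t)) * f x t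
        + (-(2 * Complex.I * lam * u x t) - Complex.I * ux x t) * g x t) t)
    (hgt : ∀ x t : ℝ, HasDerivAt (fun s : ℝ => g x s)
      ((2 * Complex.I * ε * lam * (starRingEnd ℂ) (u (-x) t)
          - Complex.I * ε * (-(starRingEnd ℂ) (ux (-x) t))) * f x t
        + (2 * Complex.I * lam ^ 2 + Complex.I * ε * u x t * (starRingEnd ℂ) (u (-x) t)) * g x t) t) :
    ∀ x t : ℝ,
      HasDerivAt (fun y : ℝ => (starRingEnd ℂ) (g (-y) t))
        ((starRingEnd ℂ) lam * (starRingEnd ℂ) (g (-x) t)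
          + u x t * (ε * (starRingEnd ℂ) (f (-x) t))) x ∧
      HasDerivAt (fun y : ℝ => ε * (starRingEnd ℂ) (f (-y) t))
        (-ε * (starRingEnd ℂ) (u (-x) t) * (starRingEnd ℂ) (g (-x) t)
          - (starRingEnd ℂ) lam * (ε * (starRingEnd ℂ) (f (-x) t))) x ∧
      HasDerivAt (fun s : ℝ => (starRingEnd ℂ) (g (-x) s))
        ((-(2 * Complex.I * ((starRingEnd ℂ) lam) ^ 2)
            - Complex.I * ε * u x t * (starRingEnd ℂ) (u (-x) t)) * (starRingEnd ℂ) (g (-x) t)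
          + (-(2 * Complex.I * (starRingEnd ℂ) lam * u x t) - Complex.I * ux x t)
            * (ε * (starRingEnd ℂ) (f (-x) t))) t ∧
      HasDerivAt (fun s : ℝ => ε * (starRingEnd ℂ) (f (-x) s))
        ((2 * Complex.I * ε * (starRingEnd ℂ) lam * (starRingEnd ℂ) (u (-x) t)
            - Complex.I * ε * (-(starRingEnd ℂ) (ux (-x) t))) * (starRingEnd ℂ) (g (-x) t)
          + (2 * Complex.I * ((starRingEnd ℂ) lam) ^ 2
            + Complex.I * ε * u x t * (starRingEnd ℂ) (u (-x) t))
            * (ε * (starRingEnd ℂ) (f (-x) t))) t := by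
  intro x t
  have hε_real : conj ε = ε := by rcases hε with rfl | rfl <;> simp
  refine ⟨(hgx (-x) t).conj_comp_neg.congr_deriv ?_,
    ((hfx (-x) t).conj_comp_neg.const_mul ε).congr_deriv ?_,
    (hgt (-x) t).conj.congr_deriv ?_, ((hft (-x) t).conj.const_mul ε).congr_deriv ?_⟩ <;>
  simp only [neg_neg, map_add, map_sub, map_neg, map_mul, map_pow, map_ofNat, conj_conj, conj_I,
    hε_real] <;>
  ring

/-- If `(f, g)ᵀ` solves the Lax pair of the nonlocal NLS equation with spectral
parameter `λ`, then `(ĝ, ε f̂)ᵀ = (g*(−x,t), ε f*(−x,t))ᵀ` solves the same linear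
system with `λ` replaced by `λ*`. -/
theorem lax_pair_nonlocal_symmetry (ε lam : ℂ) (hε : ε = 1 ∨ ε = -1)
    (u ux f g : ℝ → ℝ → ℂ)
    (hux : ∀ x t : ℝ, HasDerivAt (fun y : ℝ => u y t) (ux x t) x)
    (hfx : ∀ x t : ℝ, HasDerivAt (fun y : ℝ => f y t)
      (lam * f x t + u x t * g x t) x)
    (hgx : ∀ x t : ℝ, HasDerivAt (fun y : ℝ => g y t)
      (-ε * (starRingEnd ℂ) (u (-x) t) * f x t - lam * g x t) x)
    (hft : ∀ x t : ℝ, HasDerivAt (fun s : ℝ => f x s)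
      ((-(2 * Complex.I * lam ^ 2) - Complex.I * ε * u x t * (starRingEnd ℂ) (u (-x) t)) * f x t
        + (-(2 * Complex.I * lam * u x t) - Complex.I * ux x t) * g x t) t)
    (hgt : ∀ x t : ℝ, HasDerivAt (fun s : ℝ => g x s)
      ((2 * Complex.I * ε * lam * (starRingEnd ℂ) (u (-x) t)
          - Complex.I * ε * (-(starRingEnd ℂ) (ux (-x) t))) * f x t
        + (2 * Complex.I * lam ^ 2 + Complex.I * ε * u x t * (starRingEnd ℂ) (u (-x) t)) * g x t) t) :
    ∀ x t : ℝ,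
      HasDerivAt (fun y : ℝ => (starRingEnd ℂ) (g (-y) t))
        ((starRingEnd ℂ) lam * (starRingEnd ℂ) (g (-x) t)
          + u x t * (ε * (starRingEnd ℂ) (f (-x) t))) x ∧
      HasDerivAt (fun y : ℝ => ε * (starRingEnd ℂ) (f (-y) t))
        (-ε * (starRingEnd ℂ) (u (-x) t) * (starRingEnd ℂ) (g (-x) t)
          - (starRingEnd ℂ) lam * (ε * (starRingEnd ℂ) (f (-x) t))) x ∧
      HasDerivAt (fun s : ℝ => (starRingEnd ℂ) (g (-x) s))
        ((-(2 * Complex.I * ((starRingEnd ℂ) lam) ^ 2)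
            - Complex.I * ε * u x t * (starRingEnd ℂ) (u (-x) t)) * (starRingEnd ℂ) (g (-x) t)
          + (-(2 * Complex.I * (starRingEnd ℂ) lam * u x t) - Complex.I * ux x t)
            * (ε * (starRingEnd ℂ) (f (-x) t))) t ∧
      HasDerivAt (fun s : ℝ => ε * (starRingEnd ℂ) (f (-x) s))
        ((2 * Complex.I * ε * (starRingEnd ℂ) lam * (starRingEnd ℂ) (u (-x) t)
            - Complex.I * ε * (-(starRingEnd ℂ) (ux (-x) t))) * (starRingEnd ℂ) (g (-x) t)
          + (2 * Complex.I * ((starRingEnd ℂ) lam) ^ 2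
            + Complex.I * ε * u x t * (starRingEnd ℂ) (u (-x) t))
            * (ε * (starRingEnd ℂ) (f (-x) t))) t :=
  lax_pair_nonlocal_symmetry_general ε lam hε u ux f g hfx hgx hft hgt
end

section
/- The compatibility condition U_t − V_x + U V − V U = 0 of the Lax pair with matrices U = [[λ, u],[−ε û, −λ]] and V = [[−2iλ² − iε u û, −2iλu − i u_x],[2iελ û − iε û_x, 2iλ² + iε u û]], where û(x,t) = u*(−x,t), is equivalent to the nonlocal NLS equation i u_t(x,t) = u_xx(x,t) + 2ε u(x,t)² u*(−x,t) together with its nonlocal conjugate −i û_t(x,t) = û_xx(x,t) + 2ε û(x,t)² u(x,t). -/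
open Complex Matrix

/-- The Lax matrix `U = [[λ, u],[−ε û, −λ]]` with `û(x,t) = u*(−x,t)`. -/
noncomputable def Umat (ε lam : ℂ) (u : ℝ → ℝ → ℂ) (x t : ℝ) : Matrix (Fin 2) (Fin 2) ℂ :=
  !![lam, u x t; -ε * (starRingEnd ℂ) (u (-x) t), -lam]

/-- The Lax matrix `V`. -/
noncomputable def Vmat (ε lam : ℂ) (u ux : ℝ → ℝ → ℂ) (x t : ℝ) : Matrix (Fin 2) (Fin 2) ℂ :=
  !![-(2 * Complex.I * lam ^ 2) - Complex.I * ε * u x t * (starRingEnd ℂ) (u (-x) t),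
      -(2 * Complex.I * lam * u x t) - Complex.I * ux x t;
     2 * Complex.I * ε * lam * (starRingEnd ℂ) (u (-x) t)
       - Complex.I * ε * (-(starRingEnd ℂ) (ux (-x) t)),
     2 * Complex.I * lam ^ 2 + Complex.I * ε * u x t * (starRingEnd ℂ) (u (-x) t)]

/-- The entrywise `t`-derivative of `U`. -/
noncomputable def Utmat (ε : ℂ) (ut : ℝ → ℝ → ℂ) (x t : ℝ) : Matrix (Fin 2) (Fin 2) ℂ :=
  !![0, ut x t; -ε * (starRingEnd ℂ) (ut (-x) t), 0]

/-- The entrywise `x`-derivative of `V`. -/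
noncomputable def Vxmat (ε lam : ℂ) (u ux uxx : ℝ → ℝ → ℂ) (x t : ℝ) :
    Matrix (Fin 2) (Fin 2) ℂ :=
  !![-(Complex.I * ε * (ux x t * (starRingEnd ℂ) (u (-x) t)
        + u x t * (-(starRingEnd ℂ) (ux (-x) t)))),
      -(2 * Complex.I * lam * ux x t) - Complex.I * uxx x t;
     2 * Complex.I * ε * lam * (-(starRingEnd ℂ) (ux (-x) t))
       - Complex.I * ε * (starRingEnd ℂ) (uxx (-x) t),
     Complex.I * ε * (ux x t * (starRingEnd ℂ) (u (-x) t)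
       + u x t * (-(starRingEnd ℂ) (ux (-x) t)))]

/-- The zero-curvature (compatibility) condition `U_t − V_x + UV − VU = 0` of the Lax
pair is equivalent to the nonlocal NLS equation `i u_t = u_xx + 2ε u² u*(−x,t)`
together with its nonlocal conjugate `−i û_t = û_xx + 2ε û² u`. -/
theorem zero_curvature_iff_nnls (ε lam : ℂ) (hε : ε = 1 ∨ ε = -1)
    (u ux uxx ut : ℝ → ℝ → ℂ)
    (hux : ∀ x t : ℝ, HasDerivAt (fun y : ℝ => u y t) (ux x t) x)
    (huxx : ∀ x t : ℝ, HasDerivAt (fun y : ℝ => ux y t) (uxx x t) x)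
    (hut : ∀ x t : ℝ, HasDerivAt (fun s : ℝ => u x s) (ut x t) t) :
    (∀ x t : ℝ,
      Utmat ε ut x t - Vxmat ε lam u ux uxx x t
        + Umat ε lam u x t * Vmat ε lam u ux x t
        - Vmat ε lam u ux x t * Umat ε lam u x t = 0)
    ↔ (∀ x t : ℝ,
        Complex.I * ut x t = uxx x t + 2 * ε * (u x t) ^ 2 * (starRingEnd ℂ) (u (-x) t) ∧
        -(Complex.I * (starRingEnd ℂ) (ut (-x) t)) =
          (starRingEnd ℂ) (uxx (-x) t)
            + 2 * ε * ((starRingEnd ℂ) (u (-x) t)) ^ 2 * u x t) := by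

  have hI : Complex.I * Complex.I = -1 := Complex.I_mul_I
  constructor
  · intro h x t
    have H := h x t
    have h01 := congrFun (congrFun H 0) 1
    have h10 := congrFun (congrFun H 1) 0
    simp [Umat, Vmat, Utmat, Vxmat, Matrix.mul_apply, Fin.sum_univ_two] at h01 h10
    rcases hε with rfl | rfl
    · constructor
      · linear_combination Complex.I * h01
          - (uxx x t + 2 * u x t ^ 2 * (starRingEnd ℂ) (u (-x) t)) * hI
      · linear_combination Complex.I * h10
          - ((starRingEnd ℂ) (uxx (-x) t)
              + 2 * ((starRingEnd ℂ) (u (-x) t)) ^ 2 * u x t) * hI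
    · constructor
      · linear_combination Complex.I * h01
          + (2 * u x t ^ 2 * (starRingEnd ℂ) (u (-x) t) - uxx x t) * hI
      · linear_combination -Complex.I * h10
          + (2 * ((starRingEnd ℂ) (u (-x) t)) ^ 2 * u x t
              - (starRingEnd ℂ) (uxx (-x) t)) * hI
  · intro h x t
    obtain ⟨h1, h2⟩ := h x t
    ext i j
    fin_cases i <;> fin_cases j <;>
      simp [Umat, Vmat, Utmat, Vxmat, Matrix.mul_apply, Fin.sum_univ_two] <;>
      rcases hε with rfl | rfl <;>
      first
        | ring1
        | linear_combination -Complex.I * h1 + ut x t * hI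
        | linear_combination -Complex.I * h2 - (starRingEnd ℂ) (ut (-x) t) * hI
        | linear_combination Complex.I * h2 + (starRingEnd ℂ) (ut (-x) t) * hI
end

section
/- Let ρ > 0, σ = ±1, φ ∈ ℝ, λ ∈ ℂ with λ ≠ iσρ and λ ≠ −iσρ, μ = √(λ² + ρ²), χ = x − 2iλt, and α, β nonzero complex constants. Then f(x,t) = e^{iρ²t + iφ/2}(α e^{μχ} + β e^{−μχ}) and g(x,t) = e^{−iρ²t − iφ/2}[(α(μ−λ)/ρ) e^{μχ} − (β(μ+λ)/ρ) e^{−μχ}] satisfy the Lax pair equations Ψ_x = UΨ, Ψ_t = VΨ with potential u = ρ e^{2iρ²t + iφ}, û = ρ e^{−2iρ²t − iφ}, and ε = −1. -/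
/-!
The Lax pair is linear in `Ψ = (f, g)`, so it suffices to treat the two exponential modes
`ν = ±μ` separately. For a single mode every derivative is multiplication by a constant, and with
`κ = (ν - λ)/ρ` the four Lax equations reduce to `ρκ = ν - λ`, `κ(ν + λ) = ρ` (that is,
`ν² = λ² + ρ²`) and to the relations `u û = ρ²`, `u·e^{-iθ} = ρ e^{iθ}`, `û·e^{iθ} = ρ e^{-iθ}`
between the potentials and the phase `θ = ρ²t + φ/2`.
-/

open Complex

def SolvesLaxPair (lam : ℂ) (u uh f g : ℝ → ℝ → ℂ) : Prop :=
  ∀ x t : ℝ,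
    HasDerivAt (fun y : ℝ => f y t) (lam * f x t + u x t * g x t) x ∧
    HasDerivAt (fun y : ℝ => g y t) (uh x t * f x t - lam * g x t) x ∧
    HasDerivAt (fun s : ℝ => f x s)
      ((-(2 * I * lam ^ 2) + I * u x t * uh x t) * f x t
        + (-(2 * I * lam * u x t)) * g x t) t ∧
    HasDerivAt (fun s : ℝ => g x s)
      ((-(2 * I * lam * uh x t)) * f x t
        + (2 * I * lam ^ 2 - I * u x t * uh x t) * g x t) t

namespace SolvesLaxPair

variable {lam : ℂ} {u uh f g f₂ g₂ : ℝ → ℝ → ℂ}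

theorem const_mul (h : SolvesLaxPair lam u uh f g) (c : ℂ) :
    SolvesLaxPair lam u uh (fun x t => c * f x t) (fun x t => c * g x t) := by
  intro x t
  obtain ⟨hfx, hgx, hft, hgt⟩ := h x t
  refine ⟨(hfx.const_mul c).congr_deriv ?_, (hgx.const_mul c).congr_deriv ?_,
    (hft.const_mul c).congr_deriv ?_, (hgt.const_mul c).congr_deriv ?_⟩ <;> ring

theorem add (h : SolvesLaxPair lam u uh f g) (h₂ : SolvesLaxPair lam u uh f₂ g₂) :
    SolvesLaxPair lam u uh (fun x t => f x t + f₂ x t) (fun x t => g x t + g₂ x t) := by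
  intro x t
  obtain ⟨hfx, hgx, hft, hgt⟩ := h x t
  obtain ⟨hfx₂, hgx₂, hft₂, hgt₂⟩ := h₂ x t
  refine ⟨(hfx.add hfx₂).congr_deriv ?_, (hgx.add hgx₂).congr_deriv ?_,
    (hft.add hft₂).congr_deriv ?_, (hgt.add hgt₂).congr_deriv ?_⟩ <;> ring

end SolvesLaxPair

theorem solvesLaxPair_of_modes {ρ lam ν κ : ℂ} {u uh F H : ℝ → ℝ → ℂ}
    (hFx : ∀ x t, HasDerivAt (fun y => F y t) (ν * F x t) x)
    (hHx : ∀ x t, HasDerivAt (fun y => H y t) (ν * H x t) x)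
    (hFt : ∀ x t, HasDerivAt (fun s => F x s) ((I * ρ ^ 2 - 2 * I * lam * ν) * F x t) t)
    (hHt : ∀ x t, HasDerivAt (fun s => H x s) ((-(I * ρ ^ 2) - 2 * I * lam * ν) * H x t) t)
    (huH : ∀ x t, u x t * H x t = ρ * F x t) (huhF : ∀ x t, uh x t * F x t = ρ * H x t)
    (huuh : ∀ x t, u x t * uh x t = ρ ^ 2)
    (hκ₁ : ρ * κ = ν - lam) (hκ₂ : κ * (ν + lam) = ρ) :
    SolvesLaxPair lam u uh F (fun x t => κ * H x t) := by
  intro x t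
  refine ⟨(hFx x t).congr_deriv ?_, ((hHx x t).const_mul κ).congr_deriv ?_,
    (hFt x t).congr_deriv ?_, ((hHt x t).const_mul κ).congr_deriv ?_⟩
  · linear_combination (-F x t) * hκ₁ - κ * huH x t
  · linear_combination H x t * hκ₂ - huhF x t
  · linear_combination (2 * I * lam * F x t) * hκ₁ + (2 * I * lam * κ) * huH x t
      - I * F x t * huuh x t
  · linear_combination κ * I * H x t * huuh x t - 2 * I * lam * H x t * hκ₂
      + 2 * I * lam * huhF x t

noncomputable def expWave (a b ν c : ℂ) (x t : ℝ) : ℂ :=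
  exp (a * t + b) * exp (ν * ((x : ℂ) - c * t))

theorem hasDerivAt_expWave_fst (a b ν c : ℂ) (x t : ℝ) :
    HasDerivAt (fun y => expWave a b ν c y t) (ν * expWave a b ν c x t) x := by
  have h : HasDerivAt (fun z : ℂ => exp (a * t + b) * exp (ν * (z - c * t)))
      (exp (a * t + b) * (exp (ν * ((x : ℂ) - c * t)) * (ν * 1))) x :=
    ((((hasDerivAt_id _).sub_const _).const_mul ν).cexp).const_mul _
  exact h.comp_ofReal.congr_deriv (by simp only [expWave]; ring)

theorem hasDerivAt_expWave_snd (a b ν c : ℂ) (x t : ℝ) :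
    HasDerivAt (fun s => expWave a b ν c x s) ((a - ν * c) * expWave a b ν c x t) t := by
  have h : HasDerivAt (fun z : ℂ => exp (a * z + b) * exp (ν * (x - c * z)))
      (exp (a * t + b) * (a * 1) * exp (ν * ((x : ℂ) - c * t))
        + exp (a * t + b) * (exp (ν * ((x : ℂ) - c * t)) * (ν * -(c * 1)))) t :=
    ((((hasDerivAt_id _).const_mul a).add_const b).cexp).mul
      ((((hasDerivAt_id _).const_mul c).const_sub _).const_mul ν).cexp
  exact h.comp_ofReal.congr_deriv (by simp only [expWave]; ring)

theorem solvesLaxPair_expWave {ρ φ lam ν κ : ℂ} {u uh : ℝ → ℝ → ℂ}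
    (hu : ∀ x t : ℝ, u x t = ρ * exp (2 * I * ρ ^ 2 * t + I * φ))
    (huh : ∀ x t : ℝ, uh x t = ρ * exp (-(2 * I * ρ ^ 2 * t) - I * φ))
    (hκ₁ : ρ * κ = ν - lam) (hκ₂ : κ * (ν + lam) = ρ) :
    SolvesLaxPair lam u uh (expWave (I * ρ ^ 2) (I * φ / 2) ν (2 * I * lam))
      (fun x t => κ * expWave (-(I * ρ ^ 2)) (-(I * φ / 2)) ν (2 * I * lam) x t) := by
  refine solvesLaxPair_of_modes (hasDerivAt_expWave_fst _ _ _ _) (hasDerivAt_expWave_fst _ _ _ _)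
    (fun x t => (hasDerivAt_expWave_snd _ _ _ _ x t).congr_deriv (by ring))
    (fun x t => (hasDerivAt_expWave_snd _ _ _ _ x t).congr_deriv (by ring))
    (fun x t => ?_) (fun x t => ?_) (fun x t => ?_) hκ₁ hκ₂
  · rw [hu, expWave, expWave, mul_assoc, ← mul_assoc (exp _), ← exp_add]
    ring_nf
  · rw [huh, expWave, expWave, mul_assoc, ← mul_assoc (exp _), ← exp_add]
    ring_nf
  · rw [hu, huh, mul_mul_mul_comm, ← exp_add,
      show 2 * I * ρ ^ 2 * t + I * φ + (-(2 * I * ρ ^ 2 * t) - I * φ) = 0 by ring,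
      exp_zero, mul_one, sq]

theorem exponential_eigenfunctions_solve_lax_pair_general (ρ φ : ℝ) (hρ : 0 < ρ)
    (lam μ α β : ℂ)
    (hμ : μ ^ 2 = lam ^ 2 + (ρ : ℂ) ^ 2)
    (f g u uh : ℝ → ℝ → ℂ)
    (hf : ∀ x t : ℝ, f x t =
      Complex.exp (Complex.I * ρ ^ 2 * t + Complex.I * φ / 2) *
        (α * Complex.exp (μ * ((x : ℂ) - 2 * Complex.I * lam * t))
          + β * Complex.exp (-(μ * ((x : ℂ) - 2 * Complex.I * lam * t)))))
    (hg : ∀ x t : ℝ, g x t =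
      Complex.exp (-(Complex.I * ρ ^ 2 * t) - Complex.I * φ / 2) *
        ((α * (μ - lam) / ρ) * Complex.exp (μ * ((x : ℂ) - 2 * Complex.I * lam * t))
          - (β * (μ + lam) / ρ) * Complex.exp (-(μ * ((x : ℂ) - 2 * Complex.I * lam * t)))))
    (hu : ∀ x t : ℝ, u x t = (ρ : ℂ) * Complex.exp (2 * Complex.I * ρ ^ 2 * t + Complex.I * φ))
    (huh : ∀ x t : ℝ, uh x t =
      (ρ : ℂ) * Complex.exp (-(2 * Complex.I * ρ ^ 2 * t) - Complex.I * φ)) :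
    ∀ x t : ℝ,
      HasDerivAt (fun y : ℝ => f y t) (lam * f x t + u x t * g x t) x ∧
      HasDerivAt (fun y : ℝ => g y t) (uh x t * f x t - lam * g x t) x ∧
      HasDerivAt (fun s : ℝ => f x s)
        ((-(2 * Complex.I * lam ^ 2) + Complex.I * u x t * uh x t) * f x t
          + (-(2 * Complex.I * lam * u x t)) * g x t) t ∧
      HasDerivAt (fun s : ℝ => g x s)
        ((-(2 * Complex.I * lam * uh x t)) * f x t
          + (2 * Complex.I * lam ^ 2 - Complex.I * u x t * uh x t) * g x t) t := by
  have hρ0 : (ρ : ℂ) ≠ 0 := mod_cast hρ.ne'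
  have mode (ν : ℂ) (hν : ν ^ 2 = lam ^ 2 + (ρ : ℂ) ^ 2) := solvesLaxPair_expWave
    (κ := (ν - lam) / ρ) hu huh (mul_div_cancel₀ _ hρ0)
    (by field_simp; linear_combination hν)
  have hsum := ((mode μ hμ).const_mul α).add ((mode (-μ) (by rw [neg_sq, hμ])).const_mul β)
  show SolvesLaxPair lam u uh f g
  convert hsum using 3
  · simp only [hf, expWave, neg_mul]
    ring
  · simp only [hg, expWave, neg_mul, ← sub_eq_add_neg]
    ring

/-- The explicit exponential eigenfunctions `(f, g)ᵀ` solve the Lax pair of the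
defocusing nonlocal NLS equation (`ε = −1`) with the plane-wave potential
`u = ρ e^{2iρ²t+iφ}`, `û = ρ e^{−2iρ²t−iφ}`. -/
theorem exponential_eigenfunctions_solve_lax_pair (ρ σ φ : ℝ) (hρ : 0 < ρ)
    (hσ : σ = 1 ∨ σ = -1) (lam μ α β : ℂ) (hα : α ≠ 0) (hβ : β ≠ 0)
    (hlam1 : lam ≠ Complex.I * σ * ρ) (hlam2 : lam ≠ -(Complex.I * σ * ρ))
    (hμ : μ ^ 2 = lam ^ 2 + (ρ : ℂ) ^ 2)
    (f g u uh : ℝ → ℝ → ℂ)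
    (hf : ∀ x t : ℝ, f x t =
      Complex.exp (Complex.I * ρ ^ 2 * t + Complex.I * φ / 2) *
        (α * Complex.exp (μ * ((x : ℂ) - 2 * Complex.I * lam * t))
          + β * Complex.exp (-(μ * ((x : ℂ) - 2 * Complex.I * lam * t)))))
    (hg : ∀ x t : ℝ, g x t =
      Complex.exp (-(Complex.I * ρ ^ 2 * t) - Complex.I * φ / 2) *
        ((α * (μ - lam) / ρ) * Complex.exp (μ * ((x : ℂ) - 2 * Complex.I * lam * t))
          - (β * (μ + lam) / ρ) * Complex.exp (-(μ * ((x : ℂ) - 2 * Complex.I * lam * t)))))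
    (hu : ∀ x t : ℝ, u x t = (ρ : ℂ) * Complex.exp (2 * Complex.I * ρ ^ 2 * t + Complex.I * φ))
    (huh : ∀ x t : ℝ, uh x t =
      (ρ : ℂ) * Complex.exp (-(2 * Complex.I * ρ ^ 2 * t) - Complex.I * φ)) :
    ∀ x t : ℝ,
      HasDerivAt (fun y : ℝ => f y t) (lam * f x t + u x t * g x t) x ∧
      HasDerivAt (fun y : ℝ => g y t) (uh x t * f x t - lam * g x t) x ∧
      HasDerivAt (fun s : ℝ => f x s)
        ((-(2 * Complex.I * lam ^ 2) + Complex.I * u x t * uh x t) * f x t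
          + (-(2 * Complex.I * lam * u x t)) * g x t) t ∧
      HasDerivAt (fun s : ℝ => g x s)
        ((-(2 * Complex.I * lam * uh x t)) * f x t
          + (2 * Complex.I * lam ^ 2 - Complex.I * u x t * uh x t) * g x t) t :=
  exponential_eigenfunctions_solve_lax_pair_general ρ φ hρ lam μ α β hμ f g u uh hf hg hu huh
end

section
/- Let ρ ≠ 0, σ = ±1, s₁ ∈ ℂ with real and imaginary parts s₁R, s₁I, K = 2ρs₁ + iσ, ξ = x + 2σρt, η = x − 2σρt. The first-order rational solution u₁(x,t) = ρ e^{2iρ²t+iφ}[1 − (2ρξ + K − iσ)(2ρη − K* + iσ)/(2ρ²ξη + ρKη − ρK*ξ − (|K|²+1)/2)] is nonsingular for all (x,t) ∈ ℝ² if and only if s₁I ≠ −σ/(2ρ). -/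
/-!
Write `K = a + i b`. The imaginary part of the denominator is `2ρ b x`, and its real part is
`2ρ²x² - ((4σρ²t + a)² + b² + 1)/2`. If `b ≠ 0`, a zero must lie on `x = 0`, where the real
part is strictly negative. If `b = 0`, the point `x = √(a² + 1)/(2ρ)`, `t = 0` is a zero.
Finally `b = 2ρ Im s₁ + σ`, which vanishes exactly when `Im s₁ = -σ/(2ρ)`.
-/

open Complex

noncomputable def rationalDenom (ρ σ : ℝ) (K : ℂ) (x t : ℝ) : ℂ :=
  2 * (ρ : ℂ) ^ 2 * ((x : ℂ) + 2 * σ * ρ * t) * ((x : ℂ) - 2 * σ * ρ * t)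
    + (ρ : ℂ) * K * ((x : ℂ) - 2 * σ * ρ * t)
    - (ρ : ℂ) * (starRingEnd ℂ) K * ((x : ℂ) + 2 * σ * ρ * t)
    - ((normSq K : ℂ) + 1) / 2

section

variable (ρ σ : ℝ) (K : ℂ) (x t : ℝ)

theorem rationalDenom_im : (rationalDenom ρ σ K x t).im = 2 * ρ * K.im * x := by
  simp [rationalDenom, normSq_apply, pow_two]
  ring

theorem rationalDenom_re :
    (rationalDenom ρ σ K x t).re
      = 2 * ρ ^ 2 * x ^ 2 - ((4 * σ * ρ ^ 2 * t + K.re) ^ 2 + K.im ^ 2 + 1) / 2 := by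
  simp [rationalDenom, normSq_apply, pow_two]
  ring

end

variable {ρ : ℝ} (σ : ℝ) {K : ℂ}

theorem rationalDenom_ne_zero (hρ : ρ ≠ 0) (hK : K.im ≠ 0) (x t : ℝ) :
    rationalDenom ρ σ K x t ≠ 0 := by
  intro hD
  have hx : x = 0 := by
    have him := rationalDenom_im ρ σ K x t
    rw [hD, zero_im] at him
    simpa [hρ, hK] using him.symm
  have hre := rationalDenom_re ρ σ K x t
  rw [hD, zero_re, hx] at hre
  nlinarith [sq_nonneg (4 * σ * ρ ^ 2 * t + K.re), sq_nonneg K.im]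

theorem rationalDenom_sqrt_eq_zero (hρ : ρ ≠ 0) (hK : K.im = 0) :
    rationalDenom ρ σ K (√(K.re ^ 2 + 1) / (2 * ρ)) 0 = 0 := by
  have hsq : √(K.re ^ 2 + 1) ^ 2 = K.re ^ 2 + 1 := Real.sq_sqrt (by positivity)
  apply ext
  · rw [rationalDenom_re, hK, zero_re, div_pow, hsq]
    field_simp
    ring
  · rw [rationalDenom_im, hK, zero_im]
    ring

theorem forall_rationalDenom_ne_zero_iff (hρ : ρ ≠ 0) :
    (∀ x t, rationalDenom ρ σ K x t ≠ 0) ↔ K.im ≠ 0 :=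
  ⟨fun h hK => h _ _ (rationalDenom_sqrt_eq_zero σ hρ hK), rationalDenom_ne_zero σ hρ⟩

theorem first_order_rational_nonsingular_iff_general (ρ σ : ℝ) (hρ : ρ ≠ 0)
    (s1 : ℂ) :
    (∀ x t : ℝ,
      (2 * (ρ : ℂ) ^ 2 * ((x : ℂ) + 2 * σ * ρ * t) * ((x : ℂ) - 2 * σ * ρ * t)
        + (ρ : ℂ) * (2 * ρ * s1 + Complex.I * σ) * ((x : ℂ) - 2 * σ * ρ * t)
        - (ρ : ℂ) * (starRingEnd ℂ) (2 * ρ * s1 + Complex.I * σ) * ((x : ℂ) + 2 * σ * ρ * t)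
        - ((Complex.normSq (2 * ρ * s1 + Complex.I * σ) : ℂ) + 1) / 2) ≠ 0)
    ↔ s1.im ≠ -σ / (2 * ρ) := by
  refine (forall_rationalDenom_ne_zero_iff σ hρ).trans (not_congr ?_)
  have hK : (2 * ρ * s1 + Complex.I * σ).im = 2 * ρ * s1.im + σ := by simp
  rw [hK, eq_div_iff (mul_ne_zero two_ne_zero hρ)]
  constructor <;> intro h <;> linarith

/-- The first-order rational solution of the defocusing nonlocal NLS equation is
nonsingular on ℝ² if and only if `Im s₁ ≠ −σ/(2ρ)`: its denominator
`D(x,t) = 2ρ²ξη + ρKη − ρK*ξ − (|K|²+1)/2` never vanishes iff `Im s₁ ≠ −σ/(2ρ)`. -/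
theorem first_order_rational_nonsingular_iff (ρ σ : ℝ) (hρ : ρ ≠ 0)
    (hσ : σ = 1 ∨ σ = -1) (s1 : ℂ) :
    (∀ x t : ℝ,
      (2 * (ρ : ℂ) ^ 2 * ((x : ℂ) + 2 * σ * ρ * t) * ((x : ℂ) - 2 * σ * ρ * t)
        + (ρ : ℂ) * (2 * ρ * s1 + Complex.I * σ) * ((x : ℂ) - 2 * σ * ρ * t)
        - (ρ : ℂ) * (starRingEnd ℂ) (2 * ρ * s1 + Complex.I * σ) * ((x : ℂ) + 2 * σ * ρ * t)
        - ((Complex.normSq (2 * ρ * s1 + Complex.I * σ) : ℂ) + 1) / 2) ≠ 0)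
    ↔ s1.im ≠ -σ / (2 * ρ) :=
  first_order_rational_nonsingular_iff_general ρ σ hρ s1
end
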